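/- Let R be a semiprime ring. Then for polynomials f(x) = \sum_{i=0}^m a_i x^i and g(x) = \sum_{j=0}^n b_j x^j in R[x], we have f(x) R[x] g(x) = 0 if and only if a_i R b_j = 0 for all i, j. -/

import Mathlib

/-!
Since `X` is central, `f R[X] g = 0` already follows from `f R g = 0`, and the coefficient of
`X ^ n` in `f r g` is `∑_{i + j = n} aᵢ r bⱼ`; this gives the easy direction. Conversely, let `a`
be the leading coefficient of `f`, of degree `m`. By downward induction on `j` one gets
`a R bⱼ = 0`: once `a R bₖ = 0` for all `k > j`, semiprimeness gives `bₖ R a = 0`, so multiplying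
the coefficient of `X ^ (m + j)` in `f r g` on the right by `s a r bⱼ` leaves only
`(a r bⱼ) s (a r bⱼ) = 0`, whence `a r bⱼ = 0`. Hence `a Xᵐ` may be removed from `f`, and
induction on the number of terms of `f` finishes the proof.
-/

open Finset

section

variable {R : Type*} [Ring R]

theorem mul_mul_swap_eq_zero_of_semiprime
    (hsp : ∀ a : R, (∀ r : R, a * r * a = 0) → a = 0)
    {a b : R} (h : ∀ r : R, a * r * b = 0) (r : R) : b * r * a = 0 := by
  refine hsp _ fun s => ?_
  calc b * r * a * s * (b * r * a) = b * r * (a * s * b) * (r * a) := by simp only [mul_assoc]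
    _ = 0 := by rw [h, mul_zero, zero_mul]

namespace Polynomial

theorem coeff_mul_C_mul (f g : R[X]) (r : R) (n : ℕ) :
    (f * C r * g).coeff n = ∑ p ∈ antidiagonal n, f.coeff p.1 * r * g.coeff p.2 := by
  rw [coeff_mul]
  simp only [coeff_mul_C]

theorem forall_mul_mul_eq_zero_iff (f g : R[X]) :
    (∀ h : R[X], f * h * g = 0) ↔ ∀ r : R, f * C r * g = 0 := by
  refine ⟨fun H r => H (C r), fun H h => ?_⟩
  induction h using Polynomial.induction_on' with
  | add p q hp hq => rw [mul_add, add_mul, hp, hq, add_zero]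
  | monomial n a =>
    rw [← C_mul_X_pow_eq_monomial, ← mul_assoc, mul_assoc _ (X ^ n), X_pow_mul, ← mul_assoc,
      H, zero_mul]

theorem mul_C_mul_eq_zero_of_coeff {f g : R[X]} {r : R}
    (H : ∀ i j : ℕ, f.coeff i * r * g.coeff j = 0) : f * C r * g = 0 := by
  ext n
  simp [coeff_mul_C_mul, H]

theorem leadingCoeff_mul_mul_coeff_self_eq_zero {f g : R[X]} {r : R} (hfg : f * C r * g = 0)
    {j : ℕ} (hj : ∀ k, j < k → ∀ t : R, g.coeff k * t * f.leadingCoeff = 0) (s : R) :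
    f.leadingCoeff * r * g.coeff j * s * (f.leadingCoeff * r * g.coeff j) = 0 := by
  set x := f.leadingCoeff * r * g.coeff j
  have h := congrArg (fun p => p.coeff (f.natDegree + j) * (s * x)) hfg
  simp only [coeff_mul_C_mul, sum_mul, coeff_zero, zero_mul] at h
  rw [sum_eq_single_of_mem (f.natDegree, j) (by simp)] at h
  · simpa only [x, leadingCoeff, mul_assoc] using h
  rintro ⟨i, k⟩ hp hne
  rw [HasAntidiagonal.mem_antidiagonal] at hp
  simp only [ne_eq, Prod.mk.injEq] at hne
  rcases lt_or_ge f.natDegree i with hi | hi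
  · rw [coeff_eq_zero_of_natDegree_lt hi, zero_mul, zero_mul, zero_mul]
  calc f.coeff i * r * g.coeff k * (s * x)
      = f.coeff i * r * (g.coeff k * s * f.leadingCoeff) * (r * g.coeff j) := by
        simp only [x, mul_assoc]
    _ = 0 := by rw [hj k (by omega) s, mul_zero, zero_mul]

theorem leadingCoeff_mul_mul_coeff_eq_zero
    (hsp : ∀ a : R, (∀ r : R, a * r * a = 0) → a = 0)
    {f g : R[X]} (hfg : ∀ r : R, f * C r * g = 0) (j : ℕ) (r : R) :
    f.leadingCoeff * r * g.coeff j = 0 := by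
  suffices H : ∀ d j, g.natDegree < j + d → ∀ r, f.leadingCoeff * r * g.coeff j = 0 from
    H (g.natDegree + 1) j (by omega) r
  intro d
  induction d with
  | zero => intro j hj r; rw [coeff_eq_zero_of_natDegree_lt (by omega), mul_zero]
  | succ d ih =>
    intro j hj r
    exact hsp _ <| leadingCoeff_mul_mul_coeff_self_eq_zero (hfg r) fun k hk =>
      mul_mul_swap_eq_zero_of_semiprime hsp (ih k (by omega))

theorem coeff_mul_mul_coeff_eq_zero_of_semiprime
    (hsp : ∀ a : R, (∀ r : R, a * r * a = 0) → a = 0)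
    {f g : R[X]} (hfg : ∀ r : R, f * C r * g = 0) (i j : ℕ) (r : R) :
    f.coeff i * r * g.coeff j = 0 := by
  induction hn : #f.support generalizing f with
  | zero => simp [support_eq_empty.mp (card_eq_zero.mp hn)]
  | succ n ih =>
    have hlead := leadingCoeff_mul_mul_coeff_eq_zero hsp hfg
    by_cases hi : i = f.natDegree
    · exact hi ▸ hlead j r
    have hC (r : R) : C f.leadingCoeff * X ^ f.natDegree * C r * g = 0 :=
      mul_C_mul_eq_zero_of_coeff fun i j => by
        rw [coeff_C_mul_X_pow]; split_ifs
        exacts [hlead j r, by rw [zero_mul, zero_mul]]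
    have hfg' (r : R) : f.eraseLead * C r * g = 0 := by
      rw [eq_sub_of_add_eq f.eraseLead_add_C_mul_X_pow, sub_mul, sub_mul, hfg, hC, sub_zero]
    rw [← eraseLead_coeff_of_ne i hi]
    exact ih hfg' (card_support_eraseLead' hn)

end Polynomial

end

open Polynomial in
/-- Let `R` be a semiprime ring (`aRa = 0` implies `a = 0`). For polynomials
`f, g ∈ R[x]`, `f·R[x]·g = 0` iff `aᵢ·R·bⱼ = 0` for all coefficients `aᵢ` of `f` and
`bⱼ` of `g`. -/
theorem semiprime_polynomial_annihilator_coeffwise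
    {R : Type*} [Ring R]
    (hsp : ∀ a : R, (∀ r : R, a * r * a = 0) → a = 0)
    (f g : Polynomial R) :
    (∀ h : Polynomial R, f * h * g = 0) ↔
      ∀ (i j : ℕ) (r : R), f.coeff i * r * g.coeff j = 0 := by
  rw [forall_mul_mul_eq_zero_iff]
  exact ⟨fun H => coeff_mul_mul_coeff_eq_zero_of_semiprime hsp H,
    fun H r => mul_C_mul_eq_zero_of_coeff (H · · r)⟩
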